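/- arXiv:1903.09193 — 5 statements merged into one kernel-verified Lean document; each statement's English description precedes it below -/
import Mathlib

section
/- If f belongs to the Sobolev space H^1(a,b) and f(a) = 0 or f(b) = 0, then the L^2 norm of f on [a,b] is at most (2(b-a)/π) times the L^2 norm of its derivative f'. -/
/-!
For `k (b - a) < π / 2` the function `c x = k tan (k (b - x))` is smooth on `[a, b]`, solves the
Riccati equation `c' = -(k² + c²)` and vanishes at `b`. Integrating Picone's identity
`(f' - c f)² = f'² - k² f² - (c f²)'` then gives `k² ∫ f² ≤ ∫ f'²` when `f a = 0`, the boundary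
term `[c f²]` vanishing at both ends (for `f b = 0` use `k tan (k (a - x))`). Letting
`k ↑ π / (2 (b - a))` yields the sharp constant; staying below it avoids the pole of `c`.
-/

open Real Set MeasureTheory intervalIntegral Filter Topology

theorem MeasureTheory.Integrable.mul_of_integrable_sq {α : Type*} [MeasurableSpace α]
    {μ : Measure α} {g h : α → ℝ} (hg : AEStronglyMeasurable g μ) (hh : AEStronglyMeasurable h μ)
    (hg2 : Integrable (fun x => g x ^ 2) μ) (hh2 : Integrable (fun x => h x ^ 2) μ) :
    Integrable (fun x => g x * h x) μ :=
  ((memLp_two_iff_integrable_sq hg).2 hg2).integrable_mul ((memLp_two_iff_integrable_sq hh).2 hh2)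

theorem aestronglyMeasurable_of_forall_hasDerivAt {F : Type*} [NormedAddCommGroup F]
    [NormedSpace ℝ F] [CompleteSpace F] {μ : Measure ℝ} {f f' : ℝ → F} {s : Set ℝ}
    (hs : MeasurableSet s) (hf : ∀ x ∈ s, HasDerivAt f (f' x) x) :
    AEStronglyMeasurable f' (μ.restrict s) :=
  (aestronglyMeasurable_deriv f _).congr <|
    (ae_restrict_iff' hs).2 <| ae_of_all _ fun x hx => (hf x hx).deriv

theorem mul_integral_sq_le_of_hasDerivAt_riccati {a b κ : ℝ} {c f f' : ℝ → ℝ} (hab : a ≤ b)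
    (hc : ∀ x ∈ Icc a b, HasDerivAt c (-(κ + c x ^ 2)) x)
    (hf : ∀ x ∈ Icc a b, HasDerivAt f (f' x) x)
    (hf' : IntervalIntegrable (fun x => f' x ^ 2) volume a b) :
    κ * ∫ x in a..b, f x ^ 2 ≤ (∫ x in a..b, f' x ^ 2) + c a * f a ^ 2 - c b * f b ^ 2 := by
  rw [← uIcc_of_le hab] at hc hf
  have hcc : ContinuousOn c (uIcc a b) := fun x hx => (hc x hx).continuousAt.continuousWithinAt
  have hfc : ContinuousOn f (uIcc a b) := fun x hx => (hf x hx).continuousAt.continuousWithinAt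
  set G' : ℝ → ℝ := fun x => -(κ + c x ^ 2) * f x ^ 2 + 2 * (c x * f x * f' x)
  have hG : ∀ x ∈ uIcc a b, HasDerivAt (fun y => c y * f y ^ 2) (G' x) x := fun x hx =>
    ((hc x hx).mul ((hf x hx).pow 2)).congr_deriv (by simp only [G', Pi.pow_apply]; ring)
  have hcross : IntervalIntegrable (fun x => c x * f x * f' x) volume a b := by
    rw [intervalIntegrable_iff] at hf' ⊢
    refine Integrable.mul_of_integrable_sq ?_ ?_ ?_ hf'
    · exact ((hcc.mul hfc).mono uIoc_subset_uIcc).aestronglyMeasurable measurableSet_uIoc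
    · exact aestronglyMeasurable_of_forall_hasDerivAt measurableSet_uIoc
        fun x hx => hf x (uIoc_subset_uIcc hx)
    · exact (((hcc.mul hfc).pow 2).intervalIntegrable).def'
  have hf2 : IntervalIntegrable (fun x => f x ^ 2) volume a b := (hfc.pow 2).intervalIntegrable
  have hG'int : IntervalIntegrable G' volume a b :=
    ((((continuousOn_const.add (hcc.pow 2)).neg).mul (hfc.pow 2)).intervalIntegrable).add
      (hcross.const_mul 2)
  have hpicone : ∫ x in a..b, (f' x - c x * f x) ^ 2 =
      (∫ x in a..b, f' x ^ 2) - κ * (∫ x in a..b, f x ^ 2) - ∫ x in a..b, G' x := by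
    rw [← intervalIntegral.integral_const_mul, ← integral_sub hf' (hf2.const_mul κ), ← integral_sub
      (hf'.sub (hf2.const_mul κ)) hG'int]
    exact integral_congr fun x _ => by simp only [G']; ring
  have hnonneg : 0 ≤ ∫ x in a..b, (f' x - c x * f x) ^ 2 :=
    integral_nonneg hab fun x _ => sq_nonneg _
  rw [hpicone, integral_eq_sub_of_hasDerivAt hG hG'int] at hnonneg
  linarith

theorem hasDerivAt_const_mul_tan_mul_sub {k t x : ℝ} (hx : cos (k * (t - x)) ≠ 0) :
    HasDerivAt (fun y => k * tan (k * (t - y))) (-(k ^ 2 + (k * tan (k * (t - x))) ^ 2)) x := by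
  have hlin : HasDerivAt (fun y => k * (t - y)) (-k) x := by
    simpa using ((hasDerivAt_id x).const_sub t).const_mul k
  refine (((hasDerivAt_tan hx).comp x hlin).const_mul k).congr_deriv ?_
  rw [one_div, ← inv_one_add_tan_sq hx, inv_inv]
  ring

theorem sq_mul_integral_sq_le_integral_deriv_sq {a b k : ℝ} {f f' : ℝ → ℝ} (hab : a ≤ b)
    (hk : 0 ≤ k) (hkπ : k * (b - a) < π / 2) (hf : ∀ x ∈ Icc a b, HasDerivAt f (f' x) x)
    (hf' : IntervalIntegrable (fun x => f' x ^ 2) volume a b) (hbc : f a = 0 ∨ f b = 0) :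
    k ^ 2 * ∫ x in a..b, f x ^ 2 ≤ ∫ x in a..b, f' x ^ 2 := by
  have hc : ∀ t ∈ Icc a b, ∀ x ∈ Icc a b,
      HasDerivAt (fun y => k * tan (k * (t - y))) (-(k ^ 2 + (k * tan (k * (t - x))) ^ 2)) x := by
    intro t ht x hx
    refine hasDerivAt_const_mul_tan_mul_sub (cos_pos_of_mem_Ioo ⟨?_, ?_⟩).ne'
    · nlinarith [mul_le_mul_of_nonneg_left (show x - t ≤ b - a by linarith [ht.1, hx.2]) hk]
    · nlinarith [mul_le_mul_of_nonneg_left (show t - x ≤ b - a by linarith [ht.2, hx.1]) hk]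
  rcases hbc with hfa | hfb
  · simpa [hfa] using mul_integral_sq_le_of_hasDerivAt_riccati hab (hc b ⟨hab, le_rfl⟩) hf hf'
  · simpa [hfb] using mul_integral_sq_le_of_hasDerivAt_riccati hab (hc a ⟨le_rfl, hab⟩) hf hf'

theorem wirtinger_inequality_general (a b : ℝ) (hab : a < b) (f f' : ℝ → ℝ)
    (hderiv : ∀ x ∈ Set.Icc a b, HasDerivAt f (f' x) x)
    (hf'2 : IntervalIntegrable (fun x => (f' x) ^ 2) MeasureTheory.volume a b)
    (hbc : f a = 0 ∨ f b = 0) :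
    Real.sqrt (∫ x in a..b, (f x) ^ 2) ≤
      (2 * (b - a) / Real.pi) * Real.sqrt (∫ x in a..b, (f' x) ^ 2) := by
  set K := π / (2 * (b - a))
  have hK : 0 < K := div_pos pi_pos (by linarith)
  have hsq : K ^ 2 * ∫ x in a..b, f x ^ 2 ≤ ∫ x in a..b, f' x ^ 2 := by
    refine le_of_tendsto (f := fun k => k ^ 2 * ∫ x in a..b, f x ^ 2) (x := 𝓝[<] K) ?_ ?_
    · exact ((continuous_pow 2).mul continuous_const).continuousWithinAt
    · filter_upwards [Ioo_mem_nhdsLT hK] with k hk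
      refine sq_mul_integral_sq_le_integral_deriv_sq hab.le hk.1.le ?_ hderiv hf'2 hbc
      calc k * (b - a) < K * (b - a) := mul_lt_mul_of_pos_right hk.2 (by linarith)
        _ = π / 2 := by simp only [K]; field_simp [(sub_pos.2 hab).ne']
  rw [← inv_div, le_inv_mul_iff₀ hK, ← sqrt_sq hK.le, ← sqrt_mul (sq_nonneg K)]
  exact sqrt_le_sqrt hsq

/-- Wirtinger's inequality: for `f ∈ H^1(a,b)` with `f a = 0` or `f b = 0`,
`‖f‖_{L²} ≤ (2(b-a)/π) ‖f'‖_{L²}`. -/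
theorem wirtinger_inequality (a b : ℝ) (hab : a < b) (f f' : ℝ → ℝ)
    (hderiv : ∀ x ∈ Set.Icc a b, HasDerivAt f (f' x) x)
    (hf2 : IntervalIntegrable (fun x => (f x) ^ 2) MeasureTheory.volume a b)
    (hf'2 : IntervalIntegrable (fun x => (f' x) ^ 2) MeasureTheory.volume a b)
    (hbc : f a = 0 ∨ f b = 0) :
    Real.sqrt (∫ x in a..b, (f x) ^ 2) ≤
      (2 * (b - a) / Real.pi) * Real.sqrt (∫ x in a..b, (f' x) ^ 2) :=
  wirtinger_inequality_general a b hab f f' hderiv hf'2 hbc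
end

section
/- Halanay's inequality: Let 0 < δ₁ < 2δ₀, τ_M > 0, and let V : [t₀ - τ_M, ∞) → [0, ∞) be absolutely continuous and satisfy V'(t) ≤ -2δ₀ V(t) + δ₁ sup_{θ ∈ [-τ_M, 0]} V(t+θ) for almost every t ≥ t₀. Then V(t) ≤ e^{-2δ(t - t₀)} sup_{θ ∈ [-τ_M, 0]} V(t₀ + θ) for all t ≥ t₀, where δ > 0 is the unique positive solution of δ = δ₀ - (δ₁/2) e^{2δτ_M}. -/
/-!
Compare `V` with `W t = M e^{-2δ(t - t₀)} + ε`, where `M` bounds `V` on the initial window.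
At the first time `t` at which `V` reaches `W`, `V ≤ W` on the whole delay window and `W` is
decreasing, so the delayed supremum is at most `W (t - τ)`. The equation defining `δ` then turns
the differential inequality into `V' t ≤ W' t + (δ₁ - 2δ₀) ε < W' t`, which is impossible at a
first contact from below. Letting `ε → 0` gives the bound.
-/

open Set Real

theorem IsLocalMaxOn.hasDerivAt_nonneg_of_Iic {f : ℝ → ℝ} {f' a : ℝ}
    (h : IsLocalMaxOn f (Iic a) a) (hf : HasDerivAt f f' a) : 0 ≤ f' := by
  have hcone : (-1 : ℝ) ∈ posTangentConeAt (Iic a) a :=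
    mem_posTangentConeAt_of_segment_subset <| by
      rw [segment_symm, segment_eq_Icc (by linarith)]; exact Icc_subset_Iic_self
  simpa using h.hasFDerivWithinAt_nonpos hf.hasFDerivAt.hasFDerivWithinAt hcone

theorem lt_of_deriv_lt_at_first_contact {f g f' g' : ℝ → ℝ} {a : ℝ}
    (hf : ContinuousOn f (Ici a)) (hg : ContinuousOn g (Ici a))
    (hf' : ∀ t > a, HasDerivAt f (f' t) t) (hg' : ∀ t > a, HasDerivAt g (g' t) t)
    (ha : f a < g a)
    (contact : ∀ t > a, f t = g t → (∀ s ∈ Ico a t, f s < g s) → f' t < g' t) :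
    ∀ t ≥ a, f t < g t := by
  by_contra! ⟨tb, htb, htb'⟩
  set T := {t | t ∈ Ici a ∧ g t ≤ f t}
  have hT_bdd : BddBelow T := ⟨a, fun _ h => h.1⟩
  have ht₁ : sInf T ∈ T := (isClosed_Ici.isClosed_le hg hf).csInf_mem ⟨tb, htb, htb'⟩ hT_bdd
  set t₁ := sInf T
  have hat₁ : a < t₁ := ht₁.1.lt_of_ne fun h => (h ▸ ht₁.2).not_gt ha
  have before : ∀ s ∈ Ico a t₁, f s < g s := fun s hs =>
    lt_of_not_ge fun h => hs.2.not_ge (csInf_le hT_bdd ⟨hs.1, h⟩)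
  have touch : f t₁ = g t₁ := by
    refine le_antisymm ?_ ht₁.2
    refine ContinuousWithinAt.closure_le (s := Ico a t₁) ?_
      (hf' t₁ hat₁).continuousAt.continuousWithinAt
      (hg' t₁ hat₁).continuousAt.continuousWithinAt fun s hs => (before s hs).le
    rw [closure_Ico hat₁.ne]
    exact right_mem_Icc.2 hat₁.le
  have hmax : IsLocalMaxOn (fun s => f s - g s) (Iic t₁) t₁ := by
    filter_upwards [Ioc_mem_nhdsLE hat₁] with s hs
    rcases hs.2.lt_or_eq with hst | rfl
    · linarith [before s ⟨hs.1.le, hst⟩]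
    · exact le_rfl
  linarith [hmax.hasDerivAt_nonneg_of_Iic ((hf' t₁ hat₁).sub (hg' t₁ hat₁)),
    contact t₁ hat₁ touch before]

theorem halanay_lt_exp_add {δ₀ δ₁ τ t₀ δ M ε : ℝ} {V V' : ℝ → ℝ} (hδ₁ : 0 ≤ δ₁)
    (hδ₀ : δ₁ < 2 * δ₀) (hτ : 0 ≤ τ)
    (hVcont : ContinuousOn V (Ici t₀)) (hVderiv : ∀ t > t₀, HasDerivAt V (V' t) t)
    (hineq : ∀ t > t₀, V' t ≤ -2 * δ₀ * V t + δ₁ * sSup (V '' Icc (t - τ) t))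
    (hδ_nonneg : 0 ≤ δ) (hδ : δ = δ₀ - δ₁ * exp (2 * δ * τ) / 2)
    (hM : ∀ s ∈ Icc (t₀ - τ) t₀, V s ≤ M) (hM_nonneg : 0 ≤ M) (hε : 0 < ε) :
    ∀ t ≥ t₀, V t < M * exp (-2 * δ * (t - t₀)) + ε := by
  set W : ℝ → ℝ := fun s => M * exp (-2 * δ * (s - t₀)) + ε with hW
  have hW_anti : Antitone W := fun x y hxy => by
    have : -2 * δ * (y - t₀) ≤ -2 * δ * (x - t₀) := by nlinarith
    simp only [hW]
    gcongr M * exp ?_ + _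
  have hW_deriv (t : ℝ) : HasDerivAt W (-2 * δ * (W t - ε)) t :=
    (((((hasDerivAt_id' t).sub_const t₀).const_mul (-2 * δ)).exp.const_mul M).add_const ε)
      |>.congr_deriv (by simp only [hW]; ring)
  have hW_shift (t : ℝ) : W (t - τ) - ε = exp (2 * δ * τ) * (W t - ε) := by
    simp only [hW, add_sub_cancel_right]
    rw [mul_left_comm, ← exp_add]
    ring_nf
  refine lt_of_deriv_lt_at_first_contact hVcont (by fun_prop) hVderiv (fun t _ => hW_deriv t)
    ?_ ?_
  · simpa [hW] using (hM t₀ ⟨by linarith, le_rfl⟩).trans_lt (lt_add_of_pos_right M hε)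
  intro t ht htouch hbefore
  have hwindow : ∀ s ∈ Icc (t - τ) t, V s ≤ W (t - τ) := by
    intro s hs
    rcases lt_or_ge s t₀ with hs₀ | hs₀
    · calc V s ≤ M := hM s ⟨by linarith [hs.1], hs₀.le⟩
        _ ≤ W t₀ := by simp [hW, hε.le]
        _ ≤ W (t - τ) := hW_anti (by linarith [hs.1])
    rcases hs.2.lt_or_eq with hst | rfl
    · exact (hbefore s ⟨hs₀, hst⟩).le.trans (hW_anti hs.1)
    · exact htouch ▸ hW_anti hs.1
  have hsup : sSup (V '' Icc (t - τ) t) ≤ W (t - τ) :=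
    csSup_le ((nonempty_Icc.2 (by linarith)).image V) (forall_mem_image.2 hwindow)
  calc V' t ≤ -2 * δ₀ * V t + δ₁ * sSup (V '' Icc (t - τ) t) := hineq t ht
    _ ≤ -2 * δ₀ * W t + δ₁ * W (t - τ) := by rw [htouch]; gcongr
    _ = -2 * δ * (W t - ε) + (δ₁ - 2 * δ₀) * ε := by
      rw [← sub_add_cancel (W (t - τ)) ε, hW_shift]
      linear_combination (2 * (W t - ε)) * hδ
    _ < -2 * δ * (W t - ε) := by nlinarith

/-- Halanay's inequality: if `0 < δ₁ < 2δ₀` and the absolutely continuous nonnegative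
function `V` satisfies `V'(t) ≤ -2δ₀ V(t) + δ₁ sup_{θ∈[-τ_M,0]} V(t+θ)` for `t ≥ t₀`,
then `V(t) ≤ e^{-2δ(t-t₀)} sup_{θ∈[-τ_M,0]} V(t₀+θ)` for `t ≥ t₀`, where `δ > 0`
solves `δ = δ₀ - (δ₁/2) e^{2δτ_M}`. -/
theorem halanay_inequality (δ₀ δ₁ τM t₀ : ℝ) (hδ₁ : 0 < δ₁) (hδ₀ : δ₁ < 2 * δ₀)
    (hτM : 0 < τM) (V V' : ℝ → ℝ)
    (hVnn : ∀ t, 0 ≤ V t) (hVcont : Continuous V)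
    (hVderiv : ∀ t ≥ t₀, HasDerivAt V (V' t) t)
    (hineq : ∀ t ≥ t₀, V' t ≤ -2 * δ₀ * V t + δ₁ * sSup (V '' Set.Icc (t - τM) t))
    (δ : ℝ) (hδpos : 0 < δ) (hδ : δ = δ₀ - δ₁ * Real.exp (2 * δ * τM) / 2) :
    ∀ t ≥ t₀, V t ≤ Real.exp (-2 * δ * (t - t₀)) * sSup (V '' Set.Icc (t₀ - τM) t₀) := by
  intro t ht
  set M := sSup (V '' Icc (t₀ - τM) t₀)
  have hM : ∀ s ∈ Icc (t₀ - τM) t₀, V s ≤ M := fun s hs =>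
    le_csSup (isCompact_Icc.image hVcont).bddAbove (mem_image_of_mem V hs)
  have hM_nonneg : 0 ≤ M := (hVnn t₀).trans (hM t₀ ⟨by linarith, le_rfl⟩)
  refine le_of_forall_pos_lt_add fun ε hε => ?_
  rw [mul_comm]
  exact halanay_lt_exp_add hδ₁.le hδ₀ hτM.le hVcont.continuousOn (fun t ht => hVderiv t ht.le)
    (fun t ht => hineq t ht.le) hδpos.le hδ hM hM_nonneg hε t ht
end

section
/- Given δ > 0, K > δ, and a ≥ K²/(K-δ), the 3×3 symmetric matrix Φ with entries Φ₁₁ = -2K + 2δ, Φ₁₂ = 0, Φ₁₃ = K, Φ₂₂ = -2qa, Φ₂₃ = -qK, Φ₃₃ = -λ is negative semidefinite for λ = (a + Kq - δq)/2 and any q > 0 satisfying (K²/a - (K - δ)) q ≤ a - K²/(K - δ). -/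
/-!
`-Φ` is an arrowhead matrix with positive leading diagonal entries `2(K-δ)` and `2qa`.
Completing the square in the first two coordinates shows that such a matrix is positive
semidefinite once its Schur complement `λ - K²/(2(K-δ)) - (qK)²/(2qa)` is nonnegative, and
for `λ = (a + Kq - δq)/2` that is the hypothesis on `q` after multiplying out.
-/

namespace Matrix

theorem posSemidef_arrowhead₃ {α γ β ε ρ : ℝ} (hα : 0 < α) (hγ : 0 < γ)
    (hschur : β ^ 2 / α + ε ^ 2 / γ ≤ ρ) :
    (!![α, 0, β; 0, γ, ε; β, ε, ρ] : Matrix (Fin 3) (Fin 3) ℝ).PosSemidef := by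
  refine PosSemidef.of_dotProduct_mulVec_nonneg ?_ fun x => ?_
  · ext i j
    fin_cases i <;> fin_cases j <;> rfl
  have hquad : star x ⬝ᵥ (!![α, 0, β; 0, γ, ε; β, ε, ρ] *ᵥ x) =
      α * (x 0 + β / α * x 2) ^ 2 + γ * (x 1 + ε / γ * x 2) ^ 2 +
        (ρ - β ^ 2 / α - ε ^ 2 / γ) * x 2 ^ 2 := by
    simp only [mulVec, dotProduct, Fin.sum_univ_three, of_apply, cons_val', cons_val_zero,
      cons_val_one, cons_val_two, empty_val', cons_val_fin_one, tail_cons, vecHead,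
      Pi.star_apply, star_trivial]
    field_simp
    ring
  rw [hquad]
  have hρ : 0 ≤ ρ - β ^ 2 / α - ε ^ 2 / γ := by linarith
  positivity

end Matrix

/-- The matrix `Φ = [[-2K+2δ, 0, K], [0, -2qa, -qK], [K, -qK, -λ]]` is negative
semidefinite (i.e. `-Φ` is positive semidefinite) for `λ = (a + Kq - δq)/2` and any
`q > 0` with `(K²/a - (K-δ)) q ≤ a - K²/(K-δ)`, given `δ > 0`, `K > δ`, `a ≥ K²/(K-δ)`. -/
theorem Phi_negSemidef (δ K a q lam : ℝ) (hδ : 0 < δ) (hK : δ < K)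
    (ha : K ^ 2 / (K - δ) ≤ a) (hq : 0 < q)
    (hqcond : (K ^ 2 / a - (K - δ)) * q ≤ a - K ^ 2 / (K - δ))
    (hlam : lam = (a + K * q - δ * q) / 2) :
    (-(!![-2 * K + 2 * δ, 0, K; 0, -2 * q * a, -q * K; K, -q * K, -lam] :
        Matrix (Fin 3) (Fin 3) ℝ)).PosSemidef := by
  have hKδ : 0 < K - δ := sub_pos.2 hK
  have ha0 : 0 < a := (div_pos (pow_pos (hδ.trans hK) 2) hKδ).trans_le ha
  have hneg : -(!![-2 * K + 2 * δ, 0, K; 0, -2 * q * a, -q * K; K, -q * K, -lam] :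
      Matrix (Fin 3) (Fin 3) ℝ) = !![2 * (K - δ), 0, -K; 0, 2 * q * a, q * K; -K, q * K, lam] := by
    ext i j
    fin_cases i <;> fin_cases j <;> simp [mul_sub, neg_add_eq_sub]
  rw [hneg]
  refine Matrix.posSemidef_arrowhead₃ (by positivity) (by positivity) ?_
  have hschur : (-K) ^ 2 / (2 * (K - δ)) + (q * K) ^ 2 / (2 * q * a) =
      (K ^ 2 / (K - δ) + K ^ 2 / a * q) / 2 := by
    field_simp
  rw [hschur, hlam]
  linarith
end

section
/- Let e : [0, 2π] × [0, ∞) → ℝ be a classical solution of the heat equation with pointwise feedback e_t = a e_{xx} - K e(π, t), with periodic boundary conditions e(0,t) = e(2π,t), e_x(0,t) = e_x(2π,t), where K > δ > 0 and a ≥ K²/(K - δ). Then the functional V(t) = ∫_0^{2π} e(x,t)² dx + q ∫_0^{2π} e_x(x,t)² dx (with q > 0 chosen so that (K²/a - (K-δ))q ≤ a - K²/(K-δ)) satisfies V'(t) + 2δ V(t) ≤ 0 for all t ≥ 0, and hence V(t) ≤ e^{-2δt} V(0). -/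
/-!
Integrating by parts with the periodic boundary conditions gives
`V' = -2a‖eₓ‖² - 2K e(π) ∫ e - 2qa‖eₓₓ‖²`; the second integration by parts needs `∂ₓ eₜ = eₜₓ`,
which follows from the joint continuity of `eₜₓ`. Young's inequality bounds the feedback term by
`‖σ‖²` with `σ = e - e(π)`, and the sharp Wirtinger inequalities `‖σ‖² ≤ 4‖eₓ‖²`,
`‖eₓ‖² ≤ ‖eₓ - eₓ(π)‖² ≤ 4‖eₓₓ‖²` (the middle step because `eₓ` has mean zero) hold for functions
vanishing at the midpoint of `[0, 2π]`. They come from the Riccati trick: if `ρ' = k² + ρ²` then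
`(g' + ρ g)² = g'² - k² g² + (ρ g²)'`, with `ρ = k tan (k (x - c))`. The condition on `q` makes the
resulting coefficient of `‖eₓ‖²` nonpositive, so `V' + 2δV ≤ 0`, and Grönwall's inequality gives the
decay.
-/

open MeasureTheory intervalIntegral Real Set Filter Topology

section Wirtinger

variable {g g' ρ : ℝ → ℝ} {A B k : ℝ}

theorem sq_mul_integral_sq_le_of_riccati (hAB : A ≤ B) (hg : ∀ x, HasDerivAt g (g' x) x)
    (hg' : Continuous g') (hρ : ∀ x ∈ Icc A B, HasDerivAt ρ (k ^ 2 + ρ x ^ 2) x) :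
    k ^ 2 * ∫ x in A..B, g x ^ 2 ≤ (∫ x in A..B, g' x ^ 2) + (ρ B * g B ^ 2 - ρ A * g A ^ 2) := by
  rw [← uIcc_of_le hAB] at hρ
  have hgc : Continuous g := continuous_iff_continuousAt.2 fun x => (hg x).continuousAt
  have hρc : ContinuousOn ρ (uIcc A B) := fun x hx => (hρ x hx).continuousAt.continuousWithinAt
  set F' : ℝ → ℝ := fun x => (k ^ 2 + ρ x ^ 2) * g x ^ 2 + ρ x * (2 * g x * g' x)
  have hF'int : IntervalIntegrable F' volume A B :=
    (((continuousOn_const.add (hρc.pow 2)).mul (hgc.pow 2).continuousOn).add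
      (hρc.mul ((continuous_const.mul hgc).mul hg').continuousOn)).intervalIntegrable
  have hF : ∫ x in A..B, F' x = ρ B * g B ^ 2 - ρ A * g A ^ 2 := by
    refine integral_eq_sub_of_hasDerivAt (f := fun x => ρ x * g x ^ 2) (fun x hx => ?_) hF'int
    exact ((hρ x hx).mul ((hg x).fun_pow 2)).congr_deriv (by ring)
  -- `g'² + F' - k²g² = (g' + ρ g)²`
  have hmono : ∫ x in A..B, k ^ 2 * g x ^ 2 ≤ ∫ x in A..B, (g' x ^ 2 + F' x) :=
    integral_mono_on hAB ((continuous_const.mul (hgc.pow 2)).intervalIntegrable _ _)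
      (((hg'.pow 2).intervalIntegrable _ _).add hF'int)
      fun x _ => by nlinarith [sq_nonneg (g' x + ρ x * g x)]
  rwa [intervalIntegral.integral_const_mul, intervalIntegral.integral_add (f := fun x => g' x ^ 2)
    ((hg'.pow 2).intervalIntegrable _ _) hF'int, hF] at hmono

theorem hasDerivAt_mul_tan {c x : ℝ} (hx : cos (k * (x - c)) ≠ 0) :
    HasDerivAt (fun y => k * tan (k * (y - c))) (k ^ 2 + (k * tan (k * (x - c))) ^ 2) x := by
  have hlin : HasDerivAt (fun y => k * (y - c)) k x := by
    simpa using ((hasDerivAt_id x).sub_const c).const_mul k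
  refine (((hasDerivAt_tan hx).comp x hlin).const_mul k).congr_deriv ?_
  rw [tan_eq_sin_div_cos]
  field_simp
  linear_combination (-k ^ 2) * sin_sq_add_cos_sq (k * (x - c))

theorem sq_mul_integral_sq_le_of_eq_zero_midpoint (hAB : A ≤ B)
    (hg : ∀ x, HasDerivAt g (g' x) x) (hg' : Continuous g') (hm : g ((A + B) / 2) = 0)
    (hk : 0 ≤ k) (hkAB : k * (B - A) < π) :
    k ^ 2 * ∫ x in A..B, g x ^ 2 ≤ ∫ x in A..B, g' x ^ 2 := by
  set m := (A + B) / 2 with hm_def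
  -- on each half, `ρ = k tan (k (x - c))` with `c` the outer endpoint vanishes at `c`, and `g`
  -- vanishes at `m`, so no boundary term remains
  have hcos : ∀ c, ∀ x, |x - c| ≤ (B - A) / 2 → cos (k * (x - c)) ≠ 0 := by
    intro c x hx
    refine (cos_pos_of_mem_Ioo (abs_lt.1 ?_)).ne'
    rw [abs_mul, abs_of_nonneg hk]
    nlinarith [mul_le_mul_of_nonneg_left hx hk]
  have hleft := sq_mul_integral_sq_le_of_riccati (show A ≤ m by linarith) hg hg' fun x hx =>
    hasDerivAt_mul_tan (hcos A x (abs_le.2 ⟨by linarith [hx.1], by linarith [hx.2]⟩))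
  have hright := sq_mul_integral_sq_le_of_riccati (show m ≤ B by linarith) hg hg' fun x hx =>
    hasDerivAt_mul_tan (hcos B x (abs_le.2 ⟨by linarith [hx.1], by linarith [hx.2]⟩))
  have hgc : Continuous g := continuous_iff_continuousAt.2 fun x => (hg x).continuousAt
  simp only [hm, sub_self, mul_zero, tan_zero, zero_mul] at hleft hright
  rw [← integral_add_adjacent_intervals (b := m) (f := fun x => g x ^ 2)
      ((hgc.pow 2).intervalIntegrable _ _) ((hgc.pow 2).intervalIntegrable _ _),
    ← integral_add_adjacent_intervals (b := m) (f := fun x => g' x ^ 2)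
      ((hg'.pow 2).intervalIntegrable _ _) ((hg'.pow 2).intervalIntegrable _ _)]
  linarith

theorem integral_sq_le_of_eq_zero_midpoint (hAB : A < B)
    (hg : ∀ x, HasDerivAt g (g' x) x) (hg' : Continuous g') (hm : g ((A + B) / 2) = 0) :
    ∫ x in A..B, g x ^ 2 ≤ ((B - A) / π) ^ 2 * ∫ x in A..B, g' x ^ 2 := by
  set k₀ := π / (B - A)
  have hk₀ : 0 < k₀ := div_pos pi_pos (sub_pos.2 hAB)
  -- the sharp constant `k₀` is reached as a limit of the admissible `k < k₀`
  have hlim : k₀ ^ 2 * ∫ x in A..B, g x ^ 2 ≤ ∫ x in A..B, g' x ^ 2 := by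
    refine le_of_tendsto
      ((((continuous_pow 2).mul continuous_const).tendsto k₀).mono_left nhdsWithin_le_nhds)
      (eventually_of_mem (Ioo_mem_nhdsLT hk₀) fun k hk => ?_)
    refine sq_mul_integral_sq_le_of_eq_zero_midpoint hAB.le hg hg' hm hk.1.le ?_
    calc k * (B - A) < k₀ * (B - A) := mul_lt_mul_of_pos_right hk.2 (sub_pos.2 hAB)
      _ = π := div_mul_cancel₀ _ (sub_pos.2 hAB).ne'
  have : ((B - A) / π) ^ 2 * k₀ ^ 2 = 1 := by
    rw [← mul_pow, div_mul_div_comm, mul_comm, div_self (by positivity), one_pow]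
  calc ∫ x in A..B, g x ^ 2 = ((B - A) / π) ^ 2 * (k₀ ^ 2 * ∫ x in A..B, g x ^ 2) := by
        rw [← mul_assoc, this, one_mul]
    _ ≤ ((B - A) / π) ^ 2 * ∫ x in A..B, g' x ^ 2 := by gcongr

theorem integral_sq_le_integral_sub_const_sq {f : ℝ → ℝ} {a b : ℝ} (hab : a ≤ b)
    (hf : Continuous f) (hmean : ∫ x in a..b, f x = 0) (c : ℝ) :
    ∫ x in a..b, f x ^ 2 ≤ ∫ x in a..b, (f x - c) ^ 2 := by
  have hexpand : ∫ x in a..b, (f x - c) ^ 2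
      = (∫ x in a..b, f x ^ 2) - 2 * c * (∫ x in a..b, f x) + c ^ 2 * (b - a) := by
    simp_rw [show ∀ x, (f x - c) ^ 2 = f x ^ 2 - 2 * c * f x + c ^ 2 from fun x => by ring]
    rw [intervalIntegral.integral_add, intervalIntegral.integral_sub,
      intervalIntegral.integral_const_mul, intervalIntegral.integral_const, smul_eq_mul]
    · ring
    all_goals apply Continuous.intervalIntegrable; fun_prop
  rw [hexpand, hmean]
  nlinarith [sq_nonneg c]

end Wirtinger

theorem hasDerivAt_of_mixed_partial {f f₁ f₂ f₁₂ : ℝ → ℝ → ℝ} {t : ℝ}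
    (hf₁ : ∀ s x, HasDerivAt (f · s) (f₁ x s) x) (hf₁c : ∀ s, Continuous (f₁ · s))
    (hf₂ : ∀ x, HasDerivAt (f x ·) (f₂ x t) t)
    (hf₁₂ : ∀ y s, HasDerivAt (f₁ y ·) (f₁₂ y s) s)
    (hf₁₂c : Continuous fun p : ℝ × ℝ => f₁₂ p.1 p.2) (x₀ : ℝ) :
    HasDerivAt (f₂ · t) (f₁₂ x₀ t) x₀ := by
  have hf₁₂t : Continuous (f₁₂ · t) := hf₁₂c.comp (continuous_id.prodMk continuous_const)
  -- `f₂ x t - f₂ x₀ t = ∂ₜ ∫_{x₀}^x f₁ y t dy = ∫_{x₀}^x f₁₂ y t dy`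
  have hdiff : ∀ x, f₂ x t = f₂ x₀ t + ∫ y in x₀..x, f₁₂ y t := by
    intro x
    obtain ⟨M, hM⟩ := ((isCompact_uIcc (a := x₀) (b := x)).prod
      (isCompact_closedBall t 1)).exists_bound_of_continuousOn hf₁₂c.continuousOn
    have hderiv := (intervalIntegral.hasDerivAt_integral_of_dominated_loc_of_deriv_le
      (μ := volume) (a := x₀) (b := x) (F := fun s y => f₁ y s) (bound := fun _ => M)
      (Metric.ball_mem_nhds t one_pos)
      (Eventually.of_forall fun s => (hf₁c s).aestronglyMeasurable)
      ((hf₁c t).intervalIntegrable _ _) hf₁₂t.aestronglyMeasurable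
      (ae_of_all _ fun y hy s hs =>
        hM (y, s) ⟨uIoc_subset_uIcc hy, Metric.ball_subset_closedBall hs⟩)
      intervalIntegrable_const (ae_of_all _ fun y _ s _ => hf₁₂ y s)).2
    have hFTC : ∀ s, ∫ y in x₀..x, f₁ y s = f x s - f x₀ s := fun s =>
      integral_eq_sub_of_hasDerivAt (fun y _ => hf₁ s y) ((hf₁c s).intervalIntegrable _ _)
    simp only [hFTC] at hderiv
    linarith [hderiv.unique ((hf₂ x).sub (hf₂ x₀))]
  rw [funext hdiff]
  exact ((hf₁₂t.integral_hasStrictDerivAt x₀ x₀).hasDerivAt).const_add _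

theorem HasDerivAt.unique_of_eqOn_Ici {f g : ℝ → ℝ} {f' g' t : ℝ} (hf : HasDerivAt f f' t)
    (hg : HasDerivAt g g' t) (hfg : EqOn f g (Ici t)) : f' = g' :=
  (uniqueDiffWithinAt_Ici t).eq_deriv _ hf.hasDerivWithinAt
    (hg.hasDerivWithinAt.congr hfg (hfg self_mem_Ici))

theorem le_exp_mul_of_deriv_le {V V' : ℝ → ℝ} {K t : ℝ}
    (hV : ∀ s ≥ 0, HasDerivAt V (V' s) s) (hV' : ∀ s ≥ 0, V' s ≤ K * V s) (ht : 0 ≤ t) :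
    V t ≤ exp (K * t) * V 0 := by
  have := le_gronwallBound_of_liminf_deriv_right_le (ε := 0) (b := t)
    (fun s hs => (hV s hs.1).continuousAt.continuousWithinAt)
    (fun s hs _ hr => (hV s hs.1).hasDerivWithinAt.liminf_right_slope_le hr) le_rfl
    (fun s hs => by simpa using hV' s hs.1) t ⟨ht, le_rfl⟩
  rwa [gronwallBound_ε0, sub_zero, mul_comm] at this

section HeatSlice

variable {u u' u'' w w' : ℝ → ℝ} {A B a c : ℝ}

theorem integral_mul_eq_of_eq_mul_sub (hAB : A ≤ B) (hu : ∀ x, HasDerivAt u (u' x) x)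
    (hu' : ∀ x, HasDerivAt u' (u'' x) x) (hu'' : Continuous u'')
    (hw : ∀ x ∈ Icc A B, w x = a * u'' x - c) (hper : u A = u B) (hper' : u' A = u' B) :
    ∫ x in A..B, u x * w x = -(a * ∫ x in A..B, u' x ^ 2) - c * ∫ x in A..B, u x := by
  have huc : Continuous u := continuous_iff_continuousAt.2 fun x => (hu x).continuousAt
  have hu'c : Continuous u' := continuous_iff_continuousAt.2 fun x => (hu' x).continuousAt
  have hparts : ∫ x in A..B, u x * u'' x = -∫ x in A..B, u' x ^ 2 := by
    rw [integral_mul_deriv_eq_deriv_mul (fun x _ => hu x) (fun x _ => hu' x)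
      (hu'c.intervalIntegrable _ _) (hu''.intervalIntegrable _ _), hper, hper']
    simp only [sq, sub_self, zero_sub]
  calc ∫ x in A..B, u x * w x = ∫ x in A..B, (a * (u x * u'' x) - c * u x) :=
        integral_congr fun x hx => by
          rw [hw x (uIcc_of_le hAB ▸ hx)]
          ring
    _ = -(a * ∫ x in A..B, u' x ^ 2) - c * ∫ x in A..B, u x := by
        rw [intervalIntegral.integral_sub, intervalIntegral.integral_const_mul,
          intervalIntegral.integral_const_mul, hparts, mul_neg]
        all_goals apply Continuous.intervalIntegrable; fun_prop

theorem integral_deriv_mul_deriv_eq_of_eq_mul_sub (hAB : A ≤ B)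
    (hu' : ∀ x, HasDerivAt u' (u'' x) x) (hu'' : Continuous u'')
    (hw : ∀ x, HasDerivAt w (w' x) x) (hw' : Continuous w')
    (hwu : ∀ x ∈ Icc A B, w x = a * u'' x - c) (hper' : u' A = u' B) (hperw : w A = w B) :
    ∫ x in A..B, u' x * w' x = -(a * ∫ x in A..B, u'' x ^ 2) := by
  have hu''w : ∫ x in A..B, u'' x * w x = a * ∫ x in A..B, u'' x ^ 2 := by
    calc ∫ x in A..B, u'' x * w x = ∫ x in A..B, (a * u'' x ^ 2 - c * u'' x) :=
          integral_congr fun x hx => by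
            rw [hwu x (uIcc_of_le hAB ▸ hx)]
            ring
      _ = a * ∫ x in A..B, u'' x ^ 2 := by
          rw [intervalIntegral.integral_sub, intervalIntegral.integral_const_mul,
            intervalIntegral.integral_const_mul,
            integral_eq_sub_of_hasDerivAt (fun x _ => hu' x) (hu''.intervalIntegrable _ _), hper',
            sub_self, mul_zero, sub_zero]
          all_goals apply Continuous.intervalIntegrable; fun_prop
  rw [integral_mul_deriv_eq_deriv_mul (fun x _ => hu' x) (fun x _ => hw x)
    (hu''.intervalIntegrable _ _) (hw'.intervalIntegrable _ _), hper', hperw, hu''w, sub_self,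
    zero_sub]

end HeatSlice

theorem mul_integral_sq_sub_mul_integral_le {u : ℝ → ℝ} {A B K δ c : ℝ} (hAB : A ≤ B)
    (hu : Continuous u) (hδK : δ < K) :
    δ * (∫ x in A..B, u x ^ 2) - K * c * ∫ x in A..B, u x
      ≤ K ^ 2 / (4 * (K - δ)) * ∫ x in A..B, (u x - c) ^ 2 := by
  have hpt : ∀ x ∈ Icc A B,
      δ * u x ^ 2 - K * c * u x ≤ K ^ 2 / (4 * (K - δ)) * (u x - c) ^ 2 := by
    intro x _
    rw [div_mul_eq_mul_div, le_div_iff₀ (by linarith)]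
    -- the difference is `((K - 2δ) u + K c)² / (4 (K - δ))`
    nlinarith [sq_nonneg ((K - 2 * δ) * u x + K * c)]
  have := integral_mono_on (μ := volume) hAB (by apply Continuous.intervalIntegrable; fun_prop)
    (by apply Continuous.intervalIntegrable; fun_prop) hpt
  rwa [intervalIntegral.integral_sub, intervalIntegral.integral_const_mul,
    intervalIntegral.integral_const_mul, intervalIntegral.integral_const_mul] at this
  all_goals apply Continuous.intervalIntegrable; fun_prop

theorem heat_leader_coeff_nonpos {a K δ q : ℝ} (hδ : 0 < δ) (hK : δ < K)
    (ha : K ^ 2 / (K - δ) ≤ a) (hq : 0 ≤ q)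
    (hqcond : (K ^ 2 / a - (K - δ)) * q ≤ a - K ^ 2 / (K - δ)) :
    K ^ 2 / (K - δ) - a + δ * q - q * a / 4 ≤ 0 := by
  have ha₀ : 0 < a := lt_of_lt_of_le (div_pos (by nlinarith) (by linarith)) ha
  -- what is left after `hqcond` is `-q (a - 2K)² / (4a)`
  have hsq : 0 ≤ q * ((a - 2 * K) ^ 2 / (4 * a)) := by positivity
  have hid : q * ((a - 2 * K) ^ 2 / (4 * a)) =
      (K ^ 2 / a - (K - δ)) * q - δ * q + q * a / 4 := by
    field_simp
    ring
  linarith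

theorem heat_leader_lyapunov_deriv_add_le {u u' u'' w w' : ℝ → ℝ} {a K δ q : ℝ} (hδ : 0 < δ)
    (hK : δ < K) (ha : K ^ 2 / (K - δ) ≤ a) (hq : 0 ≤ q)
    (hqcond : (K ^ 2 / a - (K - δ)) * q ≤ a - K ^ 2 / (K - δ))
    (hu : ∀ x, HasDerivAt u (u' x) x) (hu' : ∀ x, HasDerivAt u' (u'' x) x) (hu'' : Continuous u'')
    (hw : ∀ x, HasDerivAt w (w' x) x) (hw' : Continuous w')
    (hwu : ∀ x ∈ Icc 0 (2 * π), w x = a * u'' x - K * u π)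
    (hper : u 0 = u (2 * π)) (hper' : u' 0 = u' (2 * π)) (hperw : w 0 = w (2 * π)) :
    2 * (∫ x in (0)..(2 * π), u x * w x) + q * (2 * ∫ x in (0)..(2 * π), u' x * w' x)
      + 2 * δ * ((∫ x in (0)..(2 * π), u x ^ 2) + q * ∫ x in (0)..(2 * π), u' x ^ 2) ≤ 0 := by
  have h2π : (0 : ℝ) ≤ 2 * π := by positivity
  have huc : Continuous u := continuous_iff_continuousAt.2 fun x => (hu x).continuousAt
  have hu'c : Continuous u' := continuous_iff_continuousAt.2 fun x => (hu' x).continuousAt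
  have hmid : ((0 : ℝ) + 2 * π) / 2 = π := by ring
  have hconst : ((2 * π - 0) / π) ^ 2 = 4 := by field_simp; ring
  set X := ∫ x in (0)..(2 * π), u' x ^ 2
  set Y := ∫ x in (0)..(2 * π), u'' x ^ 2
  have huw := integral_mul_eq_of_eq_mul_sub h2π hu hu' hu'' hwu hper hper'
  have hu'w' := integral_deriv_mul_deriv_eq_of_eq_mul_sub h2π hu' hu'' hw hw' hwu hper' hperw
  have hσ : ∫ x in (0)..(2 * π), (u x - u π) ^ 2 ≤ 4 * X := by
    have := integral_sq_le_of_eq_zero_midpoint (g := fun x => u x - u π) two_pi_pos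
      (fun x => (hu x).sub_const _) hu'c (by simp only [hmid, sub_self])
    rwa [hconst] at this
  have hmean : ∫ x in (0)..(2 * π), u' x = 0 := by
    rw [integral_eq_sub_of_hasDerivAt (fun x _ => hu x) (hu'c.intervalIntegrable _ _), hper,
      sub_self]
  have hXY : X ≤ 4 * Y := by
    refine (integral_sq_le_integral_sub_const_sq h2π hu'c hmean (u' π)).trans ?_
    have := integral_sq_le_of_eq_zero_midpoint (g := fun x => u' x - u' π) two_pi_pos
      (fun x => (hu' x).sub_const _) hu'' (by simp only [hmid, sub_self])
    rwa [hconst] at this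
  have hfeedback := mul_integral_sq_sub_mul_integral_le (c := u π) h2π huc hK
  have hcoeff := heat_leader_coeff_nonpos hδ hK ha hq hqcond
  have hX : 0 ≤ X := integral_nonneg h2π fun x _ => sq_nonneg _
  have hσX :
      K ^ 2 / (4 * (K - δ)) * ∫ x in (0)..(2 * π), (u x - u π) ^ 2 ≤ K ^ 2 / (K - δ) * X :=
    (mul_le_mul_of_nonneg_left hσ (by positivity)).trans_eq (by field_simp)
  have hXY' : q * a * X ≤ q * a * (4 * Y) :=
    mul_le_mul_of_nonneg_left hXY (mul_nonneg hq (le_trans (by positivity) ha))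
  rw [huw, hu'w']
  linarith [mul_nonpos_of_nonpos_of_nonneg hcoeff hX]

theorem heat_leader_lyapunov_decay_general
    (a K δ q : ℝ) (hδ : 0 < δ) (hK : δ < K) (ha : K ^ 2 / (K - δ) ≤ a) (hq : 0 < q)
    (hqcond : (K ^ 2 / a - (K - δ)) * q ≤ a - K ^ 2 / (K - δ))
    (e ex exx et etx : ℝ → ℝ → ℝ)
    -- smoothness: all relevant functions are continuous in both variables
    (hexx_cont : Continuous fun p : ℝ × ℝ => exx p.1 p.2)
    (hetx_cont : Continuous fun p : ℝ × ℝ => etx p.1 p.2)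
    -- spatial and temporal derivatives
    (hex : ∀ t, ∀ x, HasDerivAt (fun y => e y t) (ex x t) x)
    (hexx : ∀ t, ∀ x, HasDerivAt (fun y => ex y t) (exx x t) x)
    (het : ∀ x, ∀ t, HasDerivAt (fun s => e x s) (et x t) t)
    (hetx : ∀ x, ∀ t, HasDerivAt (fun s => ex x s) (etx x t) t)
    -- the PDE with pointwise leader feedback
    (hPDE : ∀ t ≥ (0 : ℝ), ∀ x ∈ Set.Icc (0 : ℝ) (2 * Real.pi),
      et x t = a * exx x t - K * e Real.pi t)
    -- periodic boundary conditions
    (hbc : ∀ t ≥ (0 : ℝ), e 0 t = e (2 * Real.pi) t ∧ ex 0 t = ex (2 * Real.pi) t)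
    -- the Lyapunov functional and its derivative (differentiation under the integral)
    (V V' : ℝ → ℝ)
    (hV : ∀ t, V t = (∫ x in (0 : ℝ)..(2 * Real.pi), (e x t) ^ 2)
        + q * ∫ x in (0 : ℝ)..(2 * Real.pi), (ex x t) ^ 2)
    (hV' : ∀ t ≥ (0 : ℝ), HasDerivAt V (V' t) t)
    (hV'formula : ∀ t ≥ (0 : ℝ), V' t =
        2 * (∫ x in (0 : ℝ)..(2 * Real.pi), e x t * et x t)
        + q * (2 * ∫ x in (0 : ℝ)..(2 * Real.pi), ex x t * etx x t)) :
    ∀ t ≥ (0 : ℝ), V' t + 2 * δ * V t ≤ 0 ∧ V t ≤ Real.exp (-2 * δ * t) * V 0 := by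
  have hexc : ∀ t, Continuous (ex · t) := fun t =>
    continuous_iff_continuousAt.2 fun x => (hexx t x).continuousAt
  have het_x : ∀ t x, HasDerivAt (et · t) (etx x t) x := fun t =>
    hasDerivAt_of_mixed_partial hex hexc (fun x => het x t) hetx hetx_cont
  have het_per : ∀ t ≥ (0 : ℝ), et 0 t = et (2 * π) t := fun t ht =>
    (het 0 t).unique_of_eqOn_Ici (het (2 * π) t) fun s hs => (hbc s (ht.trans hs)).1
  have hdecay : ∀ t ≥ (0 : ℝ), V' t + 2 * δ * V t ≤ 0 := fun t ht => by
    rw [hV'formula t ht, hV t]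
    exact heat_leader_lyapunov_deriv_add_le hδ hK ha hq.le hqcond (hex t) (hexx t)
      (hexx_cont.comp (continuous_id.prodMk continuous_const)) (het_x t)
      (hetx_cont.comp (continuous_id.prodMk continuous_const)) (hPDE t ht) (hbc t ht).1
      (hbc t ht).2 (het_per t ht)
  exact fun t ht => ⟨hdecay t ht,
    le_exp_mul_of_deriv_le hV' (fun s hs => by linarith [hdecay s hs]) ht⟩

/-- Lyapunov decay for the heat equation with leader feedback
`e_t = a e_{xx} - K e(π,t)` on `[0,2π]` with periodic boundary conditions:
for `K > δ > 0`, `a ≥ K²/(K-δ)` and a suitable `q > 0`, the functional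
`V(t) = ∫ e² + q ∫ e_x²` satisfies `V'(t) + 2δ V(t) ≤ 0`, hence
`V(t) ≤ e^{-2δt} V(0)`. -/
theorem heat_leader_lyapunov_decay
    (a K δ q : ℝ) (hδ : 0 < δ) (hK : δ < K) (ha : K ^ 2 / (K - δ) ≤ a) (hq : 0 < q)
    (hqcond : (K ^ 2 / a - (K - δ)) * q ≤ a - K ^ 2 / (K - δ))
    (e ex exx et etx : ℝ → ℝ → ℝ)
    -- smoothness: all relevant functions are continuous in both variables
    (he_cont : Continuous fun p : ℝ × ℝ => e p.1 p.2)
    (hex_cont : Continuous fun p : ℝ × ℝ => ex p.1 p.2)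
    (hexx_cont : Continuous fun p : ℝ × ℝ => exx p.1 p.2)
    (het_cont : Continuous fun p : ℝ × ℝ => et p.1 p.2)
    (hetx_cont : Continuous fun p : ℝ × ℝ => etx p.1 p.2)
    -- spatial and temporal derivatives
    (hex : ∀ t, ∀ x, HasDerivAt (fun y => e y t) (ex x t) x)
    (hexx : ∀ t, ∀ x, HasDerivAt (fun y => ex y t) (exx x t) x)
    (het : ∀ x, ∀ t, HasDerivAt (fun s => e x s) (et x t) t)
    (hetx : ∀ x, ∀ t, HasDerivAt (fun s => ex x s) (etx x t) t)
    -- the PDE with pointwise leader feedback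
    (hPDE : ∀ t ≥ (0 : ℝ), ∀ x ∈ Set.Icc (0 : ℝ) (2 * Real.pi),
      et x t = a * exx x t - K * e Real.pi t)
    -- periodic boundary conditions
    (hbc : ∀ t ≥ (0 : ℝ), e 0 t = e (2 * Real.pi) t ∧ ex 0 t = ex (2 * Real.pi) t)
    -- the Lyapunov functional and its derivative (differentiation under the integral)
    (V V' : ℝ → ℝ)
    (hV : ∀ t, V t = (∫ x in (0 : ℝ)..(2 * Real.pi), (e x t) ^ 2)
        + q * ∫ x in (0 : ℝ)..(2 * Real.pi), (ex x t) ^ 2)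
    (hV' : ∀ t ≥ (0 : ℝ), HasDerivAt V (V' t) t)
    (hV'formula : ∀ t ≥ (0 : ℝ), V' t =
        2 * (∫ x in (0 : ℝ)..(2 * Real.pi), e x t * et x t)
        + q * (2 * ∫ x in (0 : ℝ)..(2 * Real.pi), ex x t * etx x t)) :
    ∀ t ≥ (0 : ℝ), V' t + 2 * δ * V t ≤ 0 ∧ V t ≤ Real.exp (-2 * δ * t) * V 0 :=
  heat_leader_lyapunov_decay_general a K δ q hδ hK ha hq hqcond e ex exx et etx hexx_cont hetx_cont
    hex hexx het hetx hPDE hbc V V' hV hV' hV'formula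
end

section
/- Reciprocally convex (Park) inequality: Let r > 0, s ∈ ℝ with the 2×2 matrix [[r, s], [s, r]] positive semidefinite, let α ∈ (0,1), and let ξ₁, ξ₂ ∈ ℝ. Then (1/α) r ξ₁² + (1/(1-α)) r ξ₂² ≥ r ξ₁² + r ξ₂² + 2 s ξ₁ ξ₂, i.e., (1/α)rξ₁² + (1/(1-α))rξ₂² ≥ [ξ₁, ξ₂] [[r, s],[s, r]] [ξ₁, ξ₂]ᵀ. -/
/-!
Testing the form on `(1, ±1)` gives `|s| ≤ r`. The cross term `2 s ξ₁ ξ₂` is then dominated by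
the weighted AM–GM bound `t r ξ₁² + t⁻¹ r ξ₂²` with `t = (1 - α) / α`, and
`1 / α = 1 + t`, `1 / (1 - α) = 1 + t⁻¹`.
-/

theorem Matrix.PosSemidef.two_mul_abs_le_add {a b d : ℝ}
    (h : (!![a, b; b, d] : Matrix (Fin 2) (Fin 2) ℝ).PosSemidef) : 2 * |b| ≤ a + d := by
  have hminus := h.dotProduct_mulVec_nonneg ![1, -1]
  have hplus := h.dotProduct_mulVec_nonneg ![1, 1]
  simp only [dotProduct, Pi.star_apply, star_trivial, Matrix.mulVec, Matrix.of_apply,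
    Matrix.cons_val', Matrix.cons_val_fin_one, Fin.sum_univ_two, Matrix.cons_val_zero,
    Matrix.cons_val_one, mul_one, mul_neg, one_mul, neg_mul] at hminus hplus
  cases abs_cases b <;> linarith

theorem two_mul_mul_mul_le_of_abs_le {r s t : ℝ} (hs : |s| ≤ r) (ht : 0 < t) (x y : ℝ) :
    2 * s * x * y ≤ t * r * x ^ 2 + t⁻¹ * r * y ^ 2 := by
  have hsxy : s * x * y ≤ r * (|x| * |y|) := by
    calc s * x * y ≤ |s * x * y| := le_abs_self _
      _ = |s| * (|x| * |y|) := by rw [abs_mul, abs_mul, mul_assoc]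
      _ ≤ r * (|x| * |y|) := by gcongr
  have hamgm : 2 * (t * |x|) * |y| ≤ (t * |x|) ^ 2 + |y| ^ 2 := two_mul_le_add_sq _ _
  have hr : 0 ≤ r := (abs_nonneg s).trans hs
  rw [← mul_le_mul_iff_of_pos_left ht]
  calc t * (2 * s * x * y) ≤ r * (2 * (t * |x|) * |y|) := by nlinarith
    _ ≤ r * ((t * |x|) ^ 2 + |y| ^ 2) := by gcongr
    _ = t * (t * r * x ^ 2 + t⁻¹ * r * y ^ 2) := by
      rw [sq_abs, mul_pow, sq_abs]; field_simp

theorem park_reciprocally_convex_general (r s α ξ₁ ξ₂ : ℝ)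
    (hpsd : (!![r, s; s, r] : Matrix (Fin 2) (Fin 2) ℝ).PosSemidef)
    (hα0 : 0 < α) (hα1 : α < 1) :
    r * ξ₁ ^ 2 + r * ξ₂ ^ 2 + 2 * s * ξ₁ * ξ₂ ≤
      (1 / α) * r * ξ₁ ^ 2 + (1 / (1 - α)) * r * ξ₂ ^ 2 := by
  have hs : |s| ≤ r := by linarith [hpsd.two_mul_abs_le_add]
  have hweights := two_mul_mul_mul_le_of_abs_le hs (div_pos (sub_pos.mpr hα1) hα0) ξ₁ ξ₂
  have hinv_α : 1 / α = 1 + (1 - α) / α := by field_simp; ring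
  have hinv_one_sub_α : 1 / (1 - α) = 1 + ((1 - α) / α)⁻¹ := by
    field_simp [(sub_pos.mpr hα1).ne']; ring
  rw [hinv_α, hinv_one_sub_α]
  linarith

/-- Scalar reciprocally convex (Park) inequality: if `r > 0`, `[[r,s],[s,r]] ⪰ 0` and
`α ∈ (0,1)`, then `(1/α) r ξ₁² + (1/(1-α)) r ξ₂² ≥ r ξ₁² + r ξ₂² + 2 s ξ₁ ξ₂`. -/
theorem park_reciprocally_convex (r s α ξ₁ ξ₂ : ℝ) (hr : 0 < r)
    (hpsd : (!![r, s; s, r] : Matrix (Fin 2) (Fin 2) ℝ).PosSemidef)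
    (hα0 : 0 < α) (hα1 : α < 1) :
    r * ξ₁ ^ 2 + r * ξ₂ ^ 2 + 2 * s * ξ₁ * ξ₂ ≤
      (1 / α) * r * ξ₁ ^ 2 + (1 / (1 - α)) * r * ξ₂ ^ 2 :=
  park_reciprocally_convex_general r s α ξ₁ ξ₂ hpsd hα0 hα1
end
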